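/- The multiset of 4 triples {1,2,3}, {1,4,5}, {2,4,5}, {6,7,8} is fair and non-special, yet it does not admit a nice two-coloring. -/

import Mathlib

/-!
Fairness is a finite check over the eight elements that occur. In a special family of at least
four triples the triple `{a, b, c}` occurs and meets the three others, so no triple is disjoint
from all triples different from it; here `{6, 7, 8}` is. In a nice two-coloring, the class not
containing `{6, 7, 8}` has to avoid `1`, `2` and `4`, and besides `{6, 7, 8}` only `{2, 4, 5}`,
`{1, 4, 5}` and `{1, 2, 3}` respectively do so. That class therefore takes all three, and the
other class, which is just `{6, 7, 8}`, cannot avoid `6`.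
-/

/-- `f` is a *nice (total) `c`-coloring* of the multiset `T` of tuples: the color
classes `f j` sum to `T`, and for each color `j` and every element `i` appearing in
some tuple of `T` there is a tuple of color `j` not containing `i`. -/
def NiceColoring (c : ℕ) (T : Multiset (Finset ℕ+))
    (f : Fin c → Multiset (Finset ℕ+)) : Prop :=
  (∑ j, f j) = T ∧
  ∀ j : Fin c, ∀ i : ℕ+, (∃ t ∈ T, i ∈ t) → ∃ t ∈ f j, i ∉ t

/-- `T` is *`c`-fair*: every element appearing in some tuple of `T` is absent from at
least `c` of the tuples (counted with multiplicity). -/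
def CFair (c : ℕ) (T : Multiset (Finset ℕ+)) : Prop :=
  ∀ i : ℕ+, (∃ t ∈ T, i ∈ t) →
    c ≤ Multiset.card (T.filter (fun t => i ∉ t))

/-- A multiset `T` of `n` triples is *special*: for some three distinct elements
`a, b, c` it consists of `n - 3` copies of the triple `{a, b, c}` together with three
further triples, one containing `a`, one containing `b` and one containing `c`, whose
other elements are distinct from `a`, `b`, `c`. -/
def Special (T : Multiset (Finset ℕ+)) : Prop :=
  ∃ a b c : ℕ+, a ≠ b ∧ a ≠ c ∧ b ≠ c ∧
    ∃ t₁ t₂ t₃ : Finset ℕ+,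
      T = Multiset.replicate (Multiset.card T - 3) {a, b, c} + {t₁, t₂, t₃} ∧
      a ∈ t₁ ∧ b ∉ t₁ ∧ c ∉ t₁ ∧
      a ∉ t₂ ∧ b ∈ t₂ ∧ c ∉ t₂ ∧
      a ∉ t₃ ∧ b ∉ t₃ ∧ c ∈ t₃

/-- The multiset of 4 triples `{1,2,3}, {1,4,5}, {2,4,5}, {6,7,8}`. -/
def exampleFour : Multiset (Finset ℕ+) :=
  {{1, 2, 3}, {1, 4, 5}, {2, 4, 5}, {6, 7, 8}}


theorem cFair_iff_forall_mem_biUnion {c : ℕ} {T : Multiset (Finset ℕ+)} :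
    CFair c T ↔ ∀ i ∈ T.toFinset.biUnion id, c ≤ Multiset.card (T.filter (fun t => i ∉ t)) := by
  simp only [CFair, Finset.mem_biUnion, Multiset.mem_toFinset, id]

theorem Special.exists_ne_not_disjoint {T : Multiset (Finset ℕ+)} (hT : Special T)
    (hcard : 4 ≤ Multiset.card T) {t : Finset ℕ+} (ht : t ∈ T) :
    ∃ s ∈ T, s ≠ t ∧ ¬ Disjoint s t := by
  obtain ⟨a, b, c, -, -, -, t₁, t₂, t₃, hT, ha₁, hb₁, -, ha₂, hb₂, -, ha₃, -, hc₃⟩ := hT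
  have hk : Multiset.card T - 3 ≠ 0 := by omega
  have hmem : ∀ s, s ∈ T ↔ s = {a, b, c} ∨ s = t₁ ∨ s = t₂ ∨ s = t₃ := by
    intro s
    rw [hT]
    simp only [Multiset.mem_add, Multiset.mem_replicate, hk, Multiset.insert_eq_cons,
      Multiset.mem_cons, Multiset.mem_singleton, ne_eq, not_false_eq_true, true_and]
  have habc : {a, b, c} ∈ T := (hmem _).2 (Or.inl rfl)
  rcases (hmem t).1 ht with rfl | rfl | rfl | rfl
  · exact ⟨t₁, (hmem _).2 (by simp), fun h => hb₁ (h ▸ by simp),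
      Finset.not_disjoint_iff.2 ⟨a, ha₁, by simp⟩⟩
  · exact ⟨_, habc, fun h => hb₁ (h ▸ by simp), Finset.not_disjoint_iff.2 ⟨a, by simp, ha₁⟩⟩
  · exact ⟨_, habc, fun h => ha₂ (h ▸ by simp), Finset.not_disjoint_iff.2 ⟨b, by simp, hb₂⟩⟩
  · exact ⟨_, habc, fun h => ha₃ (h ▸ by simp), Finset.not_disjoint_iff.2 ⟨c, by simp, hc₃⟩⟩

theorem mem_of_exists_not_mem_of_le {α : Type*} {T g : Multiset (Finset α)} {i : α}
    {s u : Finset α} (hg : g ≤ T) (hT : ∀ t ∈ T, i ∉ t → t = s ∨ t = u) (hu : u ∉ g)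
    (hi : ∃ t ∈ g, i ∉ t) : s ∈ g := by
  obtain ⟨t, htg, hit⟩ := hi
  rcases hT t (Multiset.mem_of_le hg htg) hit with rfl | rfl
  · exact htg
  · exact absurd htg hu

theorem not_special_exampleFour : ¬ Special exampleFour := fun h => by
  obtain ⟨s, hs, hne, hmeet⟩ :=
    h.exists_ne_not_disjoint (by decide) (t := {6, 7, 8}) (by decide)
  exact hmeet ((by decide : ∀ s ∈ exampleFour, s ≠ {6, 7, 8} → Disjoint s {6, 7, 8}) s hs hne)

theorem disjoint_of_add_eq_exampleFour {g h : Multiset (Finset ℕ+)} (hgh : g + h = exampleFour) :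
    Disjoint g h :=
  (Multiset.nodup_add.1 (hgh ▸ (by decide : exampleFour.Nodup))).2.2

theorem false_of_add_eq_exampleFour {g h : Multiset (Finset ℕ+)} (hgh : g + h = exampleFour)
    (hg : ∀ i : ℕ+, (∃ t ∈ exampleFour, i ∈ t) → ∃ t ∈ g, i ∉ t)
    (hh : ∀ i : ℕ+, (∃ t ∈ exampleFour, i ∈ t) → ∃ t ∈ h, i ∉ t)
    (h678 : ({6, 7, 8} : Finset ℕ+) ∉ g) : False := by
  have hg_le : g ≤ exampleFour := hgh ▸ Multiset.le_add_right g h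
  have hh_le : h ≤ exampleFour := hgh ▸ Multiset.le_add_left h g
  have h245 : {2, 4, 5} ∈ g :=
    mem_of_exists_not_mem_of_le (i := 1) hg_le (by decide) h678
      (hg 1 ⟨{1, 2, 3}, by decide, by decide⟩)
  have h145 : {1, 4, 5} ∈ g :=
    mem_of_exists_not_mem_of_le (i := 2) hg_le (by decide) h678
      (hg 2 ⟨{1, 2, 3}, by decide, by decide⟩)
  have h123 : {1, 2, 3} ∈ g :=
    mem_of_exists_not_mem_of_le (i := 4) hg_le (by decide) h678
      (hg 4 ⟨{1, 4, 5}, by decide, by decide⟩)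
  obtain ⟨t, hth, h6⟩ := hh 6 ⟨{6, 7, 8}, by decide, by decide⟩
  have hdisj := disjoint_of_add_eq_exampleFour hgh
  rcases (by decide : ∀ t ∈ exampleFour, (6 : ℕ+) ∉ t →
      t = {1, 2, 3} ∨ t = {1, 4, 5} ∨ t = {2, 4, 5}) t (Multiset.mem_of_le hh_le hth) h6
    with rfl | rfl | rfl
  · exact Multiset.disjoint_left.1 hdisj h123 hth
  · exact Multiset.disjoint_left.1 hdisj h145 hth
  · exact Multiset.disjoint_left.1 hdisj h245 hth

theorem not_exists_niceColoring_two_exampleFour :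
    ¬ ∃ f : Fin 2 → Multiset (Finset ℕ+), NiceColoring 2 exampleFour f := by
  rintro ⟨f, hsum, hnice⟩
  rw [Fin.sum_univ_two] at hsum
  by_cases h678 : ({6, 7, 8} : Finset ℕ+) ∈ f 0
  · exact false_of_add_eq_exampleFour ((add_comm _ _).trans hsum) (hnice 1) (hnice 0)
      (Multiset.disjoint_left.1 (disjoint_of_add_eq_exampleFour hsum) h678)
  · exact false_of_add_eq_exampleFour hsum (hnice 0) (hnice 1) h678

theorem exampleFour_fair_nonspecial_no_nice_two_coloring :
    CFair 2 exampleFour ∧ ¬ Special exampleFour ∧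
      ¬ ∃ f : Fin 2 → Multiset (Finset ℕ+), NiceColoring 2 exampleFour f :=
  ⟨cFair_iff_forall_mem_biUnion.2 (by decide), not_special_exampleFour,
    not_exists_niceColoring_two_exampleFour⟩
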